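/- If f is an ℓ-sequence of length λ and f is constant with value γ on an interval [α, α + ω^{β₁} + ... + ω^{β_k}] contained in λ (with each β_j > 0), then γ is a fixed point of φ̄_{β_j} for each j = 1, ..., k. -/

import Mathlib

open Ordinal Set

/-- The Veblen hierarchy: `phi 0 β = ω^β`, and for `α ≠ 0`, `phi α`
enumerates the common fixed points of all `phi b` with `b < α`. -/
noncomputable def phi (a : Ordinal) : Ordinal → Ordinal :=
  if a = 0 then fun b => omega0 ^ b
  else enumOrd {x | ∀ b, b < a → phi b x = x}
termination_by a
decreasing_by exact ‹_›

/-- The modified Veblen function `φ̄`. -/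
noncomputable def phib (a b : Ordinal) : Ordinal :=
  if b = 0 then 0
  else if a = 0 then omega0 ^ b
  else phi a (if b < omega0 then b - 1 else b)

/-- `ell γ` is the exponent of the last term of the Cantor normal form of `γ`;
`ell 0 = 0`. -/
noncomputable def ell (γ : Ordinal) : Ordinal :=
  (((Ordinal.CNF omega0 γ).getLast?).map Prod.fst).getD 0

/-- `f` is an ℓ-sequence of length `lam`. -/
def IsLSeq (lam : Ordinal) (f : Ordinal → Ordinal) : Prop :=
  (∀ ξ, ξ + 1 < lam → f (ξ + 1) ≤ ell (f ξ)) ∧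
  (∀ ξ β, 0 < β → ξ + omega0 ^ β < lam → phib β (f (ξ + omega0 ^ β)) ≤ ell (f ξ))

/-- `Cr a` is the range of `phib a` on nonzero inputs. -/
noncomputable def Cr (a : Ordinal) : Set Ordinal := phib a '' {b | 0 < b}

/-!
Constancy of `f` on `[α, α + 1]` forces `ℓ(γ) = γ`, so `γ` is `0` or an epsilon number, and
constancy on `[α, α + ω^b]` for `0 < b ≤ β` gives `φ_b(γ) ≤ γ`. Once all levels below `b` fix `γ`,
`φ_b` is normal, hence `γ ≤ φ_b(γ)`; induction on `b` turns the inequalities into equalities.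
-/

universe u v

theorem phi_zero_eq : phi.{u, v} 0 = fun b => ω ^ b := by
  rw [phi]; simp

theorem phi_of_ne_zero {a : Ordinal.{u}} (ha : a ≠ 0) :
    phi.{u, v} a = enumOrd {x | ∀ b < a, phi.{u, v} b x = x} := by
  rw [phi]; simp [ha]

theorem setOf_forall_phi_eq_self_eq_iInter (a : Ordinal.{u}) :
    {x : Ordinal.{v} | ∀ b < a, phi.{u, v} b x = x} =
      ⋂ b : Iio a, Function.fixedPoints (phi.{u, v} b) := by
  ext x
  simp [Function.fixedPoints, Function.IsFixedPt]

section Veblen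

variable {b c : Ordinal.{u}} {γ : Ordinal.{v}}

theorem phi_phi_zero_right (hc : c ≠ 0) (hγ : ∀ d < c, phi.{u, v} d γ = γ) :
    ∀ d < c, phi.{u, v} d (phi c 0) = phi c 0 := by
  rw [phi_of_ne_zero hc, enumOrd_zero]
  exact csInf_mem (s := {x | ∀ d < c, phi d x = x}) ⟨γ, hγ⟩

theorem phi_zero_right_lt (hnormal : Order.IsNormal (phi.{u, v} b)) (hbc : b < c)
    (hγ : ∀ d < c, phi.{u, v} d γ = γ) : phi.{u, v} b 0 < phi c 0 := by
  have hfix := phi_phi_zero_right (pos_of_gt hbc).ne' hγ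
  have hpos : 0 < phi c 0 := by
    have hω := hfix 0 (pos_of_gt hbc)
    rw [phi_zero_eq] at hω
    exact hω ▸ opow_pos _ omega0_pos
  calc phi b 0 < phi b (phi c 0) := hnormal.strictMono hpos
    _ = phi c 0 := hfix b hbc

/-- `c ↦ phi c 0` is strictly increasing on `Iio b` and bounded by `γ`; this is what makes the
levels below `b`, an ordinal of an arbitrary universe, a small family of normal functions. -/
theorem small_Iio_of_forall_phi_eq_self (hnormal : ∀ c < b, Order.IsNormal (phi.{u, v} c))
    (hγ : ∀ c < b, phi.{u, v} c γ = γ) : Small.{v} (Iio b) := by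
  let g : Iio b → Iic γ := fun c =>
    ⟨phi c 0, ((hnormal c c.2).strictMono.monotone zero_le).trans_eq (hγ c c.2)⟩
  have hg : StrictMono g := fun c c' h =>
    phi_zero_right_lt (hnormal c c.2) h fun d hd => hγ d (hd.trans c'.2)
  exact small_of_injective hg.injective

theorem isNormal_phi (hγ : ∀ c < b, phi.{u, v} c γ = γ) : Order.IsNormal (phi.{u, v} b) := by
  induction b using WellFoundedLT.induction with | _ b IH =>
  have hnormal : ∀ c < b, Order.IsNormal (phi.{u, v} c) :=
    fun c hc => IH c hc fun d hd => hγ d (hd.trans hc)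
  rcases eq_or_ne b 0 with rfl | hb
  · rw [phi_zero_eq]
    exact isNormal_opow one_lt_omega0
  have := small_Iio_of_forall_phi_eq_self hnormal hγ
  have hnormal' : ∀ c : Iio b, Order.IsNormal (phi.{u, v} c) := fun c => hnormal c c.2
  rw [phi_of_ne_zero hb, setOf_forall_phi_eq_self_eq_iInter, ← derivFamily_eq_enumOrd hnormal']
  exact isNormal_derivFamily _

theorem phi_eq_self_of_forall_phi_le (h : ∀ c ≤ b, phi.{u, v} c γ ≤ γ) : phi b γ = γ := by
  induction b using WellFoundedLT.induction with | _ b IH =>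
  exact (h b le_rfl).antisymm
    (isNormal_phi fun c hc => IH c hc fun d hd => h d (hd.trans hc.le)).strictMono.le_apply

theorem phib_eq_phi (hγ : ω ≤ γ) : phib b γ = phi.{u, v} b γ := by
  have hγ0 : γ ≠ 0 := (omega0_pos.trans_le hγ).ne'
  rcases eq_or_ne b 0 with rfl | hb
  · simp [phib, hγ0, phi_zero_eq]
  · simp [phib, hγ0, hb, hγ.not_gt]

end Veblen

theorem ell_le_log (γ : Ordinal) : ell γ ≤ log ω γ := by
  unfold ell
  rcases h : (CNF ω γ).getLast? with _ | p
  · simp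
  · obtain ⟨hne, rfl⟩ := List.mem_getLast?_eq_getLast (Option.mem_def.2 h)
    exact CNF.fst_le_log (List.getLast_mem hne)

theorem ell_le_self (γ : Ordinal) : ell γ ≤ γ :=
  (ell_le_log γ).trans (log_le_self _ _)

theorem opow_eq_self_of_ell_eq_self {γ : Ordinal} (hγ : γ ≠ 0) (h : ell γ = γ) : ω ^ γ = γ := by
  refine le_antisymm ?_ (right_le_opow γ one_lt_omega0)
  calc ω ^ γ = ω ^ ell γ := by rw [h]
    _ ≤ ω ^ log ω γ := opow_le_opow_right omega0_pos (ell_le_log γ)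
    _ ≤ γ := opow_log_le_self _ hγ

namespace IsLSeq

variable {lam α : Ordinal.{u}} {γ : Ordinal.{v}} {f : Ordinal.{u} → Ordinal.{v}}

theorem ell_eq_self_of_const (hf : IsLSeq lam f) (hlt : α + 1 < lam) (h0 : f α = γ)
    (h1 : f (α + 1) = γ) : ell γ = γ :=
  (ell_le_self γ).antisymm (by simpa [h0, h1] using hf.1 α hlt)

theorem phib_eq_self_of_const (hf : IsLSeq lam f) {β : Ordinal.{u}} (hlt : α + ω ^ β < lam)
    (hconst : ∀ x, α ≤ x → x ≤ α + ω ^ β → f x = γ) : phib β γ = γ := by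
  have hle : ∀ b ≤ β, α + ω ^ b ≤ α + ω ^ β := fun b hb => by
    gcongr
    exact omega0_pos
  have h0 : f α = γ := hconst α le_rfl le_self_add
  have hell : ell γ = γ := by
    have h1 : α + 1 ≤ α + ω ^ β := by simpa using hle 0 zero_le
    exact hf.ell_eq_self_of_const (h1.trans_lt hlt) h0 (hconst _ le_self_add h1)
  rcases eq_or_ne γ 0 with rfl | hγ
  · simp [phib]
  have hε : ω ^ γ = γ := opow_eq_self_of_ell_eq_self hγ hell
  have hωγ : ω ≤ γ := hε ▸ left_le_opow ω (pos_iff_ne_zero.2 hγ)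
  rw [phib_eq_phi hωγ]
  refine phi_eq_self_of_forall_phi_le fun b hb => ?_
  rcases eq_or_ne b 0 with rfl | hb0
  · simp only [phi_zero_eq, hε, le_rfl]
  calc phi b γ = phib b γ := (phib_eq_phi hωγ).symm
    _ ≤ ell (f α) := by
      simpa [hconst _ le_self_add (hle b hb)] using
        hf.2 α b (pos_iff_ne_zero.2 hb0) ((hle b hb).trans_lt hlt)
    _ = γ := by rw [h0, hell]

end IsLSeq

theorem stmt8_general (lam α γ : Ordinal) (f : Ordinal → Ordinal) (l : List Ordinal)
    (hf : IsLSeq lam f)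
    (hin : α + (l.map fun β => omega0 ^ β).sum < lam)
    (hconst : ∀ x, α ≤ x → x ≤ α + (l.map fun β => omega0 ^ β).sum → f x = γ) :
    ∀ β ∈ l, phib β γ = γ := by
  intro β hβ
  have hle : α + ω ^ β ≤ α + (l.map fun β => omega0 ^ β).sum := by
    gcongr
    exact List.le_sum_of_mem (List.mem_map_of_mem hβ)
  exact hf.phib_eq_self_of_const (hle.trans_lt hin) fun x hx hx' => hconst x hx (hx'.trans hle)

theorem stmt8 (lam α γ : Ordinal) (f : Ordinal → Ordinal) (l : List Ordinal)
    (hl : ∀ β ∈ l, 0 < β) (hf : IsLSeq lam f)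
    (hin : α + (l.map fun β => omega0 ^ β).sum < lam)
    (hconst : ∀ x, α ≤ x → x ≤ α + (l.map fun β => omega0 ^ β).sum → f x = γ) :
    ∀ β ∈ l, phib β γ = γ :=
  stmt8_general lam α γ f l hf hin hconst
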